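/- arXiv:2301.00446 — 2 statements merged into one kernel-verified Lean document; each statement's English description precedes it below -/
import Mathlib

section
/- Let G be a quasisimple finite group (G is perfect and G/Z(G) is simple) satisfying |G/Z(G)| < (|G/Z(G)|_{p'})^2 for every prime p. Then G has no nonprincipal irreducible character whose codegree is a prime power. -/
open FiniteDimensional CategoryTheory

/-- The kernel of a finite-dimensional complex representation, as a subgroup. -/
def repKer {G : Type} [Group G] (V : FDRep ℂ G) : Subgroup G where
  carrier := {g | V.ρ g = 1}
  one_mem' := map_one V.ρ
  mul_mem' := fun ha hb => by
    simp only [Set.mem_setOf_eq] at *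
    rw [map_mul, ha, hb, one_mul]
  inv_mem' := fun {a} ha => by
    simp only [Set.mem_setOf_eq] at *
    calc V.ρ a⁻¹ = V.ρ a⁻¹ * V.ρ a := by rw [ha, mul_one]
    _ = V.ρ (a⁻¹ * a) := (map_mul _ _ _).symm
    _ = 1 := by simp

/-- The degree `χ(1)` of the character of `V`. -/
noncomputable def degree {G : Type} [Group G] (V : FDRep ℂ G) : ℕ :=
  Module.finrank ℂ V

/-- The codegree `|G : ker χ| / χ(1)` (a positive integer for irreducible `χ`). -/
noncomputable def codeg {G : Type} [Group G] (V : FDRep ℂ G) : ℕ :=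
  (repKer V).index / degree V

/-- The set of codegrees of irreducible characters of `G`. -/
def codSet (G : Type) [Group G] : Set ℕ :=
  {n | ∃ V : FDRep ℂ G, Simple V ∧ codeg V = n}

/-- The set of degrees of irreducible characters of `G`. -/
def cdSet (G : Type) [Group G] : Set ℕ :=
  {n | ∃ V : FDRep ℂ G, Simple V ∧ degree V = n}

/-! If `χ` is nonprincipal, `ker χ` is a proper normal subgroup of the quasisimple group `G`,
hence central. So `|G : Z(G)|` divides `|G : ker χ| = χ(1) · cod(χ)`, and if `cod(χ) = p ^ k`
the `p'`-part of `|G : Z(G)|` divides `χ(1)`. Together with `χ(1)² ≤ |G : Z(G)|` this gives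
`(|G : Z(G)|_{p'})² ≤ |G : Z(G)|`, against the Kimmerle–Lyons–Sandling–Teague inequality.

`χ(1) ∣ |G : ker χ|` because `χ` is an irreducible character of `G / ker χ`, for which
`∑ χ(g⁻¹) ρ(g) = (|G| / χ(1)) · 1` is integral over `ℤ`, character values being sums of
roots of unity. `χ(1)² · |Z(G)| ≤ |G|` because central elements act by scalars of absolute
value one and `∑ |χ(g)|² = |G|`. -/

open scoped commutatorElement

open Matrix ComplexOrder in
theorem Matrix.trace_map_inv_eq_star {G n : Type*} [Group G] [Fintype G] [Fintype n]
    [DecidableEq n] (M : G →* Matrix n n ℂ) (g : G) : (M g⁻¹).trace = star (M g).trace := by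
  -- every `M g` is unitary for the averaged form `H`, so `M g⁻¹` is conjugate to `(M g)ᴴ`
  set H := ∑ x : G, (M x)ᴴ * M x with hH
  have hinvariant : (M g)ᴴ * H * M g = H := by
    simp only [hH, Matrix.mul_sum, Matrix.sum_mul]
    refine Fintype.sum_equiv (Equiv.mulRight g) _ _ fun x => ?_
    simp [Matrix.mul_assoc]
  have hpos : H.PosDef := by
    classical
    rw [hH, ← Finset.add_sum_erase _ _ (Finset.mem_univ 1), map_one, conjTranspose_one, one_mul]
    exact PosDef.one.add_posSemidef
      (posSemidef_sum _ fun x _ => posSemidef_conjTranspose_mul_self _)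
  have hdet : IsUnit H.det := (isUnit_iff_isUnit_det H).1 hpos.isUnit
  have hintertwine : (M g)ᴴ * H = H * M g⁻¹ := by
    calc (M g)ᴴ * H = (M g)ᴴ * H * (M g * M g⁻¹) := by
          rw [← map_mul, mul_inv_cancel, map_one, Matrix.mul_one]
      _ = H * M g⁻¹ := by rw [← Matrix.mul_assoc, hinvariant]
  have hconj : M g⁻¹ = H⁻¹ * ((M g)ᴴ * H) := by
    rw [hintertwine, ← Matrix.mul_assoc, nonsing_inv_mul _ hdet, Matrix.one_mul]
  rw [hconj, trace_mul_comm, Matrix.mul_assoc, mul_nonsing_inv _ hdet, Matrix.mul_one,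
    trace_conjTranspose]

theorem Module.End.HasEigenvalue.pow_eq_one {K V : Type*} [Field K] [AddCommGroup V]
    [Module K V] {f : Module.End K V} {μ : K} {n : ℕ} (hμ : f.HasEigenvalue μ)
    (hf : f ^ n = 1) : μ ^ n = 1 := by
  obtain ⟨v, hv⟩ := hμ.exists_hasEigenvector
  have hpow := hv.pow_apply n
  rw [hf, Module.End.one_apply] at hpow
  exact smul_left_injective K hv.2 (by simp only [← hpow, one_smul])

theorem isIntegral_of_sum_smul_eq_algebraMap {G B : Type*} [Group G] [Fintype G] [Ring B]
    [Nontrivial B] [Algebra ℂ B] (ρ : G →* B) (a : G → ℂ)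
    (ha : ∀ g, IsIntegral ℤ (a g)) {c : ℂ} (hc : ∑ g, a g • ρ g = algebraMap ℂ B c) :
    IsIntegral ℤ c := by
  let R := integralClosure ℤ ℂ
  let A := Algebra.adjoin R (Set.range ρ)
  have hA : (Subalgebra.toSubmodule A).FG := by
    rw [Algebra.adjoin_eq_span, MonoidHom.mclosure_range, MonoidHom.coe_mrange]
    exact Submodule.fg_span (Set.finite_range ρ)
  have hmem : ∑ g, a g • ρ g ∈ A :=
    Subalgebra.sum_mem _ fun g _ =>
      A.smul_mem (Algebra.subset_adjoin ⟨g, rfl⟩) (⟨a g, ha g⟩ : R)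
  have hR : IsIntegral R (algebraMap ℂ B c) := hc ▸ IsIntegral.of_mem_of_fg A hA _ hmem
  exact (isIntegral_algebraMap_iff (algebraMap ℂ B).injective).1 (isIntegral_trans _ hR)

theorem Nat.dvd_of_isIntegral_div {a b : ℕ} (hb : b ≠ 0) (h : IsIntegral ℤ ((a : ℂ) / b)) :
    b ∣ a := by
  have hq : IsIntegral ℤ ((a : ℚ) / b) := by
    rw [← isIntegral_algebraMap_iff (algebraMap ℚ ℂ).injective]
    simpa using h
  obtain ⟨z, hz⟩ := IsIntegrallyClosed.isIntegral_iff.1 hq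
  rw [eq_div_iff (by exact_mod_cast hb)] at hz
  have hz' : (a : ℤ) = z * b := by
    rw [algebraMap_int_eq, eq_intCast] at hz
    exact_mod_cast hz.symm
  exact Int.natCast_dvd_natCast.1 ⟨z, by rw [hz', mul_comm]⟩

theorem Nat.ordCompl_dvd_of_dvd_mul_pow {s d p k : ℕ} (hp : p.Prime) (hs : s ≠ 0)
    (h : s ∣ d * p ^ k) : s / p ^ s.factorization p ∣ d :=
  ((Nat.coprime_ordCompl hp hs).symm.pow_right k).dvd_of_dvd_mul_right
    ((Nat.ordCompl_dvd s p).trans h)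

theorem QuotientGroup.sum_comp_mk {G M : Type*} [Group G] [Fintype G] [AddCommMonoid M]
    (N : Subgroup G) [Fintype (G ⧸ N)] (f : G ⧸ N → M) :
    ∑ g : G, f g = Nat.card N • ∑ q : G ⧸ N, f q := by
  classical
  rw [← Finset.sum_fiberwise Finset.univ (fun g : G => (g : G ⧸ N)), Finset.smul_sum]
  refine Finset.sum_congr rfl fun q _ => ?_
  rw [Finset.sum_congr rfl fun g hg => congrArg f (Finset.mem_filter.1 hg).2, Finset.sum_const]
  have hfiber := QuotientGroup.card_preimage_mk N {q}
  simp only [Nat.card_unique, mul_one] at hfiber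
  rw [← hfiber, Nat.card_eq_card_toFinset]
  congr 2
  ext g
  simp

theorem Subgroup.le_center_or_eq_top_of_normal {G : Type*} [Group G]
    (hperf : _root_.commutator G = ⊤) (hsimple : IsSimpleGroup (G ⧸ center G)) (N : Subgroup G)
    [N.Normal] : N ≤ center G ∨ N = ⊤ := by
  rcases hsimple.eq_bot_or_eq_top_of_normal (N.map (QuotientGroup.mk' (center G)))
    (Normal.map ‹_› _ (QuotientGroup.mk'_surjective _)) with hbot | htop
  · left
    rwa [map_eq_bot_iff, QuotientGroup.ker_mk'] at hbot
  · right
    have hsup : N ⊔ center G = ⊤ := by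
      rw [← QuotientGroup.ker_mk' (center G), ← comap_map_eq, htop, comap_top]
    -- modulo `N` every element is central, so every commutator lies in `N`
    rw [eq_top_iff, ← hperf, _root_.commutator_def, commutator_le]
    intro g _ h _
    obtain ⟨n, hn, z, hz, rfl⟩ := mem_sup_of_normal_right.1 (hsup ▸ mem_top g)
    have hcomm : ⁅n * z, h⁆ = n * (h * n⁻¹ * h⁻¹) := by
      rw [commutatorElement_def, mul_inv_rev, mul_assoc n z h, ← mem_center_iff.1 hz h]
      group
    rw [hcomm]
    exact N.mul_mem hn (Normal.conj_mem ‹_› _ (inv_mem hn) h)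

namespace FDRep

open Module

variable {G : Type} [Group G]

theorem exists_eq_algebraMap_of_commute (V : FDRep ℂ G) [Simple V] (f : Module.End ℂ V)
    (hf : ∀ g, Commute f (V.ρ g)) : ∃ c : ℂ, f = algebraMap ℂ (Module.End ℂ V) c := by
  let φ : V ⟶ V :=
    ⟨FGModuleCat.ofHom f, fun g => by ext v; exact LinearMap.congr_fun (hf g).eq v⟩
  obtain ⟨c, hc⟩ := endomorphism_simple_eq_smul_id ℂ φ
  exact ⟨c, (congrArg (fun ψ : V ⟶ V => ψ.hom.hom.hom) hc).symm⟩

theorem sum_character_mul_character_inv [Fintype G] (V : FDRep ℂ G) [Simple V] :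
    ∑ g : G, V.character g * V.character g⁻¹ = Nat.card G :=
  (simple_iff_char_is_norm_one V).1 ‹_›

theorem repKer_eq_ker (V : FDRep ℂ G) : repKer V = V.ρ.ker := rfl

instance (V : FDRep ℂ G) : (repKer V).Normal := repKer_eq_ker V ▸ V.ρ.normal_ker

noncomputable def quotientRepKer (V : FDRep ℂ G) : FDRep ℂ (G ⧸ repKer V) :=
  FDRep.of (QuotientGroup.lift (repKer V) V.ρ (repKer_eq_ker V).le)

theorem character_quotientRepKer_mk (V : FDRep ℂ G) (g : G) :
    (quotientRepKer V).character g = V.character g :=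
  rfl

variable [Finite G]

theorem isIntegral_character (V : FDRep ℂ G) (g : G) : IsIntegral ℤ (V.character g) := by
  rw [character, Module.End.trace_eq_sum_roots_charpoly_of_splits (IsAlgClosed.splits _)]
  refine IsIntegral.multiset_sum fun μ hμ => ?_
  have hμ : Module.End.HasEigenvalue (V.ρ g) μ :=
    (Module.End.hasEigenvalue_iff_isRoot_charpoly _ _).2 (Polynomial.isRoot_of_mem_roots hμ)
  have hunity : μ ^ Nat.card G = 1 :=
    hμ.pow_eq_one (by rw [← map_pow, pow_card_eq_one', map_one])
  exact IsIntegral.of_pow Nat.card_pos (hunity ▸ isIntegral_one)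

theorem character_inv (V : FDRep ℂ G) (g : G) : V.character g⁻¹ = star (V.character g) := by
  have := Fintype.ofFinite G
  let b := Module.finBasis ℂ V
  simp only [character, LinearMap.trace_eq_matrix_trace ℂ b]
  exact Matrix.trace_map_inv_eq_star
    ((MonoidHomClass.toMonoidHom (LinearMap.toMatrixAlgEquiv b)).comp V.ρ) g

theorem finrank_ne_zero (V : FDRep ℂ G) [Simple V] : finrank ℂ V ≠ 0 := by
  intro h
  have : Subsingleton V := finrank_zero_iff.1 h
  have hzero : ∀ g, V.character g = 0 := fun g => by
    rw [character, Subsingleton.elim (V.ρ g) 0, map_zero]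
  have := Fintype.ofFinite G
  have hsum := sum_character_mul_character_inv V
  simp only [hzero, zero_mul, Finset.sum_const_zero] at hsum
  exact Nat.card_pos.ne' (by exact_mod_cast hsum.symm)

theorem finrank_dvd_card (V : FDRep ℂ G) [Simple V] : finrank ℂ V ∣ Nat.card G := by
  have := Fintype.ofFinite G
  have hn := finrank_ne_zero V
  have : Nontrivial V := Module.nontrivial_of_finrank_pos (Nat.pos_of_ne_zero hn)
  have hcomm : ∀ h, Commute (∑ g, V.character g⁻¹ • V.ρ g) (V.ρ h) := fun h => by
    simp only [Commute, SemiconjBy, Finset.sum_mul, Finset.mul_sum, smul_mul_assoc,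
      mul_smul_comm, ← map_mul]
    refine (Fintype.sum_equiv (MulAut.conj h).toEquiv _ _ fun g => ?_).symm
    simp only [MulEquiv.toEquiv_eq_coe, MulEquiv.coe_toEquiv, MulAut.conj_apply]
    rw [inv_mul_cancel_right, show (h * g * h⁻¹)⁻¹ = h * g⁻¹ * h⁻¹ by group, char_conj]
  obtain ⟨c, hc⟩ := exists_eq_algebraMap_of_commute V _ hcomm
  have htrace : c * finrank ℂ V = Nat.card G := by
    have htr := congrArg (LinearMap.trace ℂ V) hc
    simp only [map_sum, map_smul, smul_eq_mul, Algebra.algebraMap_eq_smul_one,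
      LinearMap.trace_one] at htr
    rw [← htr, ← sum_character_mul_character_inv V]
    exact Finset.sum_congr rfl fun g _ => mul_comm _ _
  have hint := isIntegral_of_sum_smul_eq_algebraMap V.ρ _
    (fun g => isIntegral_character V g⁻¹) hc
  rw [eq_div_of_mul_eq (by exact_mod_cast hn) htrace] at hint
  exact Nat.dvd_of_isIntegral_div hn hint

instance (V : FDRep ℂ G) [Simple V] : Simple (quotientRepKer V) := by
  have := Fintype.ofFinite G
  have := Fintype.ofFinite (G ⧸ repKer V)
  rw [simple_iff_char_is_norm_one]
  have hfiber := QuotientGroup.sum_comp_mk (repKer V)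
    fun q => (quotientRepKer V).character q * (quotientRepKer V).character q⁻¹
  simp only [← QuotientGroup.mk_inv, character_quotientRepKer_mk,
    sum_character_mul_character_inv, nsmul_eq_mul] at hfiber
  rw [← (repKer V).card_mul_index, Nat.cast_mul] at hfiber
  exact (mul_left_cancel₀ (by exact_mod_cast Nat.card_pos.ne') hfiber).symm

theorem degree_dvd_index_repKer (V : FDRep ℂ G) [Simple V] : degree V ∣ (repKer V).index :=
  finrank_dvd_card (quotientRepKer V)

theorem character_eq_one_of_repKer_eq_top (V : FDRep ℂ G) [Simple V] (h : repKer V = ⊤) :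
    V.character = 1 := by
  have := Fintype.ofFinite G
  have hχ : ∀ g, V.character g = finrank ℂ V := fun g => by
    rw [character, show V.ρ g = 1 from (Subgroup.eq_top_iff' _).1 h g, LinearMap.trace_one]
  have hsum := sum_character_mul_character_inv V
  simp only [hχ, Finset.sum_const, Finset.card_univ, nsmul_eq_mul, ← Nat.card_eq_fintype_card]
    at hsum
  have hn : finrank ℂ V = 1 := Nat.eq_one_of_mul_eq_one_right
    ((mul_right_eq_self₀.1 (by exact_mod_cast hsum)).resolve_right Nat.card_pos.ne')
  funext g
  rw [hχ, hn, Nat.cast_one, Pi.one_apply]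

theorem sum_normSq_character [Fintype G] (V : FDRep ℂ G) [Simple V] :
    ∑ g, Complex.normSq (V.character g) = Nat.card G := by
  have h := sum_character_mul_character_inv V
  simp only [character_inv, Complex.star_def, Complex.mul_conj] at h
  exact_mod_cast h

theorem normSq_character_of_mem_center (V : FDRep ℂ G) [Simple V] {z : G}
    (hz : z ∈ Subgroup.center G) : Complex.normSq (V.character z) = finrank ℂ V ^ 2 := by
  have : Nontrivial V :=
    Module.nontrivial_of_finrank_pos (Nat.pos_of_ne_zero (finrank_ne_zero V))
  obtain ⟨c, hc⟩ := exists_eq_algebraMap_of_commute V (V.ρ z) fun g => by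
    simp only [Commute, SemiconjBy, ← map_mul, Subgroup.mem_center_iff.1 hz g]
  have hunit : c ^ Nat.card G = 1 := by
    apply (algebraMap ℂ (Module.End ℂ V)).injective
    rw [map_pow, ← hc, ← map_pow, pow_card_eq_one', map_one, map_one]
  have hnorm : ‖c‖ = 1 := Complex.norm_eq_one_of_pow_eq_one hunit Nat.card_pos.ne'
  rw [character, hc, Algebra.algebraMap_eq_smul_one, map_smul, LinearMap.trace_one, smul_eq_mul,
    Complex.normSq_mul, Complex.normSq_eq_norm_sq, hnorm, Complex.normSq_natCast]
  ring

theorem sq_finrank_le_index_center (V : FDRep ℂ G) [Simple V] :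
    finrank ℂ V ^ 2 ≤ (Subgroup.center G).index := by
  classical
  have := Fintype.ofFinite G
  have hle : ∑ z ∈ Finset.univ.filter (· ∈ Subgroup.center G), Complex.normSq (V.character z)
      ≤ ∑ g, Complex.normSq (V.character g) :=
    Finset.sum_le_sum_of_subset_of_nonneg (Finset.filter_subset _ _)
      fun g _ _ => Complex.normSq_nonneg _
  rw [sum_normSq_character, Finset.sum_congr rfl fun z hz =>
    normSq_character_of_mem_center V (Finset.mem_filter.1 hz).2, Finset.sum_const,
    nsmul_eq_mul] at hle
  have hcard : (Finset.univ.filter (· ∈ Subgroup.center G)).card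
      = Nat.card (Subgroup.center G) := by
    rw [Nat.card_eq_fintype_card, Fintype.card_subtype]
  rw [hcard, ← (Subgroup.center G).card_mul_index] at hle
  exact Nat.le_of_mul_le_mul_left (by exact_mod_cast hle) Nat.card_pos

end FDRep

theorem stmt7 {G : Type} [Group G] [Finite G]
    (hperf : commutator G = ⊤)
    (hsimple : IsSimpleGroup (G ⧸ Subgroup.center G))
    (hKLST : ∀ p : ℕ, p.Prime →
      Nat.card (G ⧸ Subgroup.center G) <
        (Nat.card (G ⧸ Subgroup.center G) /
          p ^ ((Nat.card (G ⧸ Subgroup.center G)).factorization p)) ^ 2) :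
    ¬ ∃ V : FDRep ℂ G, Simple V ∧ V.character ≠ 1 ∧ IsPrimePow (codeg V) := by
  rintro ⟨V, hV, hχ, p, k, hp, -, hcodeg⟩
  rw [← Nat.prime_iff] at hp
  rcases (repKer V).le_center_or_eq_top_of_normal hperf hsimple with hZ | htop
  · have hindex : (repKer V).index = degree V * p ^ k := by
      rw [hcodeg, codeg, Nat.mul_div_cancel' (FDRep.degree_dvd_index_repKer V)]
    have hdvd := Nat.ordCompl_dvd_of_dvd_mul_pow hp Subgroup.index_ne_zero_of_finite
      (hindex ▸ Subgroup.index_dvd_of_le hZ)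
    have hdeg : 0 < degree V := Nat.pos_of_ne_zero (FDRep.finrank_ne_zero V)
    have hle := (Nat.pow_le_pow_left (Nat.le_of_dvd hdeg hdvd) 2).trans
      (FDRep.sq_finrank_le_index_center V)
    exact (hKLST p hp).not_ge hle
  · exact hχ (FDRep.character_eq_one_of_repKer_eq_top V htop)
end

section
/- Let G be a finite group with a faithful irreducible character χ of p-power codegree for some prime p. If χ is induced from a Sylow p-subgroup of G and n denotes the product of the orders of the nonabelian composition factors of G, and if n_{p'} > n_p holds, then cod(χ) > n_p. -/
open FiniteDimensional CategoryTheory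

open Classical in
noncomputable def inducedChar {G : Type} [Group G] [Finite G] (P : Subgroup G) (θ : P → ℂ) :
    G → ℂ := fun g =>
  (Nat.card P : ℂ)⁻¹ * ∑ᶠ x : G, if h : x⁻¹ * g * x ∈ P then θ ⟨x⁻¹ * g * x, h⟩ else 0

/-!
Evaluating the induced character at `1` gives `χ(1) = |G : P| θ(1)`, so `|G|_{p'}` divides
`χ(1)`; as `n` divides `|G|`, this gives `n_{p'} ≤ |G|_{p'} ≤ χ(1)`. The first orthogonality
relation gives `χ(1)² ≤ |G|`, and since `χ` is faithful, `cod(χ) = |G| / χ(1) ≥ χ(1)`.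
Hence `n_p < n_{p'} ≤ χ(1) ≤ cod(χ)`.
-/

open Module Polynomial Set

namespace Module.End

variable {K V : Type*} [Field K] [AddCommGroup V] [Module K V]

lemma pow_eq_one_of_hasEigenvector {f : End K V} {m : ℕ} (hf : f ^ m = 1) {μ : K} {v : V}
    (hv : f.HasEigenvector μ v) : μ ^ m = 1 := by
  have h := hv.pow_apply m
  rw [hf, one_apply] at h
  have h' : (μ ^ m - 1) • v = 0 := by rw [sub_smul, one_smul, ← h, sub_self]
  exact sub_eq_zero.mp ((smul_eq_zero.mp h').resolve_right hv.2)

lemma eigenspace_le_eigenspace_inv {f g : End K V} (hgf : g * f = 1) (μ : K) :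
    f.eigenspace μ ≤ g.eigenspace μ⁻¹ := by
  intro v hv
  rw [mem_eigenspace_iff] at hv ⊢
  have h : μ • g v = v := by rw [← map_smul, ← hv, ← mul_apply, hgf, one_apply]
  rcases eq_or_ne μ 0 with rfl | hμ
  · rw [zero_smul] at h
    simp [← h]
  · exact (eq_inv_smul_iff₀ hμ).mpr h

lemma mapsTo_of_le_eigenspace {f : End K V} {p : Submodule K V} {μ : K}
    (hp : p ≤ f.eigenspace μ) : MapsTo f p p := fun v hv => by
  rw [mem_eigenspace_iff.mp (hp hv)]
  exact p.smul_mem μ hv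

lemma trace_restrict_of_le_eigenspace [FiniteDimensional K V] {f : End K V}
    {p : Submodule K V} {μ : K} (hp : p ≤ f.eigenspace μ) (h : MapsTo f p p) :
    LinearMap.trace K p (f.restrict h) = μ * finrank K p := by
  have : f.restrict h = μ • LinearMap.id := by
    ext ⟨v, hv⟩
    exact mem_eigenspace_iff.mp (hp hv)
  rw [this, map_smul, LinearMap.trace_id, smul_eq_mul]

lemma iSup_eigenspace_eq_top_of_pow_eq_one [IsAlgClosed K] [CharZero K]
    [FiniteDimensional K V] {f : End K V} {m : ℕ} (hm : m ≠ 0) (hf : f ^ m = 1) :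
    ⨆ μ, f.eigenspace μ = ⊤ := by
  refine IsSemisimple.iSup_eigenspace_eq_top
    (isSemisimple_of_squarefree_aeval_eq_zero (p := X ^ m - C 1) ?_ ?_)
  · exact (separable_X_pow_sub_C 1 (Nat.cast_ne_zero.mpr hm) one_ne_zero).squarefree
  · simp [hf]

/-- On each eigenspace of `f`, the map `g` acts by `μ⁻¹ = conj μ`, as `μ` is a root of unity. -/
lemma trace_eq_star_trace_of_pow_eq_one {V : Type*} [AddCommGroup V] [Module ℂ V]
    [FiniteDimensional ℂ V] {f g : End ℂ V} {m : ℕ} (hm : m ≠ 0) (hf : f ^ m = 1)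
    (hgf : g * f = 1) : LinearMap.trace ℂ V g = star (LinearMap.trace ℂ V f) := by
  have hInt : DirectSum.IsInternal f.eigenspace :=
    DirectSum.isInternal_submodule_of_iSupIndep_of_iSup_eq_top f.eigenspaces_iSupIndep
      (iSup_eigenspace_eq_top_of_pow_eq_one hm hf)
  have hfin := WellFoundedGT.finite_ne_bot_of_iSupIndep f.eigenspaces_iSupIndep
  rw [LinearMap.trace_eq_sum_trace_restrict' hInt hfin
      fun μ => mapsTo_of_le_eigenspace (eigenspace_le_eigenspace_inv hgf μ),
    LinearMap.trace_eq_sum_trace_restrict' hInt hfin fun μ => mapsTo_of_le_eigenspace le_rfl,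
    star_sum]
  refine Finset.sum_congr rfl fun μ hμ => ?_
  obtain ⟨v, hv⟩ := (hasEigenvalue_iff.mpr (hfin.mem_toFinset.mp hμ)).exists_hasEigenvector
  have hμ1 : ‖μ‖ = 1 :=
    Complex.norm_eq_one_of_pow_eq_one (pow_eq_one_of_hasEigenvector hf hv) hm
  rw [trace_restrict_of_le_eigenspace (eigenspace_le_eigenspace_inv hgf μ),
    trace_restrict_of_le_eigenspace le_rfl, star_mul', star_natCast, Complex.star_def,
    ← Complex.inv_eq_conj hμ1]

end Module.End

namespace FDRep

variable {G : Type} [Group G]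

lemma char_inv {g : G} (hg : IsOfFinOrder g) (V : FDRep ℂ G) :
    V.character g⁻¹ = star (V.character g) := by
  refine Module.End.trace_eq_star_trace_of_pow_eq_one (orderOf_pos_iff.mpr hg).ne' ?_ ?_
  · rw [← map_pow, pow_orderOf_eq_one, map_one]
  · rw [← map_mul, inv_mul_cancel, map_one]

lemma finrank_pos (V : FDRep ℂ G) [Simple V] : 0 < finrank ℂ V := by
  refine Nat.pos_of_ne_zero fun h => ?_
  have : Subsingleton V := finrank_zero_iff.mp h
  have : Subsingleton (V ⟶ V) :=
    ⟨fun _ _ => Action.Hom.ext <| FGModuleCat.hom_ext <| LinearMap.ext fun _ =>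
      Subsingleton.elim _ _⟩
  have h1 := finrank_hom_simple_simple V V
  rw [if_pos ⟨Iso.refl V⟩, finrank_zero_of_subsingleton] at h1
  exact zero_ne_one h1

lemma finrank_mul_self_le_card [Finite G] (V : FDRep ℂ G) [Simple V] :
    finrank ℂ V * finrank ℂ V ≤ Nat.card G := by
  have := Fintype.ofFinite G
  have hG : (Nat.card G : ℂ) ≠ 0 := Nat.cast_ne_zero.mpr Nat.card_pos.ne'
  have := invertibleOfNonzero hG
  have h := char_orthonormal V V
  rw [if_pos ⟨Iso.refl V⟩, inv_mul_eq_one₀ hG] at h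
  have hsum : ∑ g : G, Complex.normSq (V.character g) = Nat.card G := by
    apply Complex.ofReal_injective
    push_cast
    rw [h]
    refine Finset.sum_congr rfl fun g _ => ?_
    rw [char_inv (isOfFinOrder_of_finite g), Complex.star_def, Complex.mul_conj]
  have h1 : Complex.normSq (V.character 1) ≤ Nat.card G :=
    hsum ▸ Finset.single_le_sum (fun g _ => Complex.normSq_nonneg _) (Finset.mem_univ 1)
  rw [char_one, Complex.normSq_natCast] at h1
  exact_mod_cast h1

end FDRep

section

variable {G : Type} [Group G] [Finite G]

lemma inducedChar_one (P : Subgroup G) (θ : P → ℂ) : inducedChar P θ 1 = P.index * θ 1 := by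
  have := Fintype.ofFinite G
  have hθ (h : (1 : G) ∈ P) : θ ⟨1, h⟩ = θ 1 := rfl
  have hP : (Nat.card P : ℂ) ≠ 0 := Nat.cast_ne_zero.mpr Nat.card_pos.ne'
  simp only [inducedChar, mul_one, inv_mul_cancel, P.one_mem, dite_true, hθ,
    finsum_eq_sum_of_fintype, Finset.sum_const, Finset.card_univ, ← Nat.card_eq_fintype_card,
    nsmul_eq_mul, ← P.index_mul_card]
  field_simp
  push_cast
  ring

lemma degree_eq_index_mul_degree_of_character_eq_inducedChar {P : Subgroup G} (V : FDRep ℂ G)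
    (W : FDRep ℂ P) (h : V.character = inducedChar P W.character) :
    degree V = P.index * degree W := by
  have h1 := congrFun h 1
  rw [inducedChar_one, FDRep.char_one, FDRep.char_one] at h1
  exact_mod_cast h1

lemma Sylow.index_eq_ordCompl {p : ℕ} [Fact p.Prime] (P : Sylow p G) :
    (P : Subgroup G).index = ordCompl[p] (Nat.card G) := by
  have h := (P : Subgroup G).index_mul_card
  rw [P.card_eq_multiplicity] at h
  exact (Nat.div_eq_of_eq_mul_left (pow_pos (Fact.out : p.Prime).pos _) h.symm).symm

end

namespace Subgroup

variable {G : Type} [Group G] {c : ℕ → Subgroup G} {k : ℕ}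

lemma prod_relIndex_eq_card (h0 : c 0 = ⊥) (hc : ∀ i < k, c i ≤ c (i + 1)) :
    ∏ i ∈ Finset.range k, (c i).relIndex (c (i + 1)) = Nat.card (c k) := by
  induction k with
  | zero => simp [h0]
  | succ k ih =>
    rw [Finset.prod_range_succ, ih fun i hi => hc i (by omega), ← relIndex_bot_left,
      relIndex_mul_relIndex _ _ _ bot_le (hc k k.lt_succ_self), relIndex_bot_left]

lemma prod_dvd_card_of_dvd_relIndex (h0 : c 0 = ⊥) (hk : c k = ⊤)
    (hc : ∀ i < k, c i ≤ c (i + 1)) {f : ℕ → ℕ} (hf : ∀ i < k, f i ∣ (c i).relIndex (c (i + 1))) :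
    ∏ i ∈ Finset.range k, f i ∣ Nat.card G := by
  rw [← card_top, ← hk, ← prod_relIndex_eq_card h0 hc]
  exact Finset.prod_dvd_prod_of_dvd _ _ fun i hi => hf i (Finset.mem_range.mp hi)

end Subgroup

theorem stmt19_general {G : Type} [Group G] [Finite G] {p : ℕ} [Fact p.Prime]
    (V : FDRep ℂ G) [Simple V] (hfaith : repKer V = ⊥)
    -- χ is induced from an irreducible character of a Sylow p-subgroup of G
    (P : Sylow p G) (W : FDRep ℂ ↥(P : Subgroup G))
    (hind : V.character = inducedChar (P : Subgroup G) W.character)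
    -- a composition series ⊥ = c 0 < c 1 < ... < c k = ⊤ of G
    (k : ℕ) (c : ℕ → Subgroup G) (h0 : c 0 = ⊥) (hk : c k = ⊤)
    (hlt : ∀ i < k, c i < c (i + 1))
    -- f i is the order of the i-th composition factor if it is nonabelian, and 1 otherwise
    (f : ℕ → ℕ)
    (hfab : ∀ i < k, (∀ x ∈ c (i + 1), ∀ y ∈ c (i + 1), x * y * x⁻¹ * y⁻¹ ∈ c i) → f i = 1)
    (hfna : ∀ i < k, ¬ (∀ x ∈ c (i + 1), ∀ y ∈ c (i + 1), x * y * x⁻¹ * y⁻¹ ∈ c i) →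
      f i = (c i).relIndex (c (i + 1)))
    -- n is the product of the orders of the nonabelian composition factors of G
    (n : ℕ) (hn : n = ∏ i ∈ Finset.range k, f i)
    (hineq : p ^ (n.factorization p) < n / p ^ (n.factorization p)) :
    p ^ (n.factorization p) < codeg V := by
  have hn_dvd : n ∣ Nat.card G := by
    refine hn ▸ Subgroup.prod_dvd_card_of_dvd_relIndex h0 hk (fun i hi => (hlt i hi).le)
      fun i hi => ?_
    by_cases hab : ∀ x ∈ c (i + 1), ∀ y ∈ c (i + 1), x * y * x⁻¹ * y⁻¹ ∈ c i
    · rw [hfab i hi hab]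
      exact one_dvd _
    · exact (hfna i hi hab).dvd
  have hdeg := degree_eq_index_mul_degree_of_character_eq_inducedChar V W hind
  rw [P.index_eq_ordCompl] at hdeg
  have hpos : 0 < degree V := FDRep.finrank_pos V
  have hcod : codeg V = Nat.card G / degree V := by rw [codeg, hfaith, Subgroup.index_bot]
  calc p ^ n.factorization p < ordCompl[p] n := hineq
    _ ≤ ordCompl[p] (Nat.card G) :=
      Nat.le_of_dvd (Nat.ordCompl_pos p Nat.card_pos.ne')
        (Nat.ordCompl_dvd_ordCompl_of_dvd hn_dvd p)
    _ ≤ degree V := Nat.le_of_dvd hpos (Dvd.intro _ hdeg.symm)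
    _ ≤ Nat.card G / degree V :=
      (Nat.le_div_iff_mul_le hpos).mpr (FDRep.finrank_mul_self_le_card V)
    _ = codeg V := hcod.symm

theorem stmt19 {G : Type} [Group G] [Finite G] {p : ℕ} [Fact p.Prime]
    (V : FDRep ℂ G) [Simple V] (hfaith : repKer V = ⊥)
    (hpow : ∃ a : ℕ, codeg V = p ^ a)
    -- χ is induced from an irreducible character of a Sylow p-subgroup of G
    (P : Sylow p G) (W : FDRep ℂ ↥(P : Subgroup G)) (hW : Simple W)
    (hind : V.character = inducedChar (P : Subgroup G) W.character)
    -- a composition series ⊥ = c 0 < c 1 < ... < c k = ⊤ of G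
    (k : ℕ) (c : ℕ → Subgroup G) (h0 : c 0 = ⊥) (hk : c k = ⊤)
    (hlt : ∀ i < k, c i < c (i + 1))
    (hnorm : ∀ i < k, ((c i).subgroupOf (c (i + 1))).Normal)
    (hmax : ∀ i < k, ∀ d : Subgroup G, c i ≤ d → d ≤ c (i + 1) →
      (d.subgroupOf (c (i + 1))).Normal → d = c i ∨ d = c (i + 1))
    -- f i is the order of the i-th composition factor if it is nonabelian, and 1 otherwise
    (f : ℕ → ℕ)
    (hfab : ∀ i < k, (∀ x ∈ c (i + 1), ∀ y ∈ c (i + 1), x * y * x⁻¹ * y⁻¹ ∈ c i) → f i = 1)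
    (hfna : ∀ i < k, ¬ (∀ x ∈ c (i + 1), ∀ y ∈ c (i + 1), x * y * x⁻¹ * y⁻¹ ∈ c i) →
      f i = (c i).relIndex (c (i + 1)))
    -- n is the product of the orders of the nonabelian composition factors of G
    (n : ℕ) (hn : n = ∏ i ∈ Finset.range k, f i)
    (hineq : p ^ (n.factorization p) < n / p ^ (n.factorization p)) :
    p ^ (n.factorization p) < codeg V :=
  stmt19_general V hfaith P W hind k c h0 hk hlt f hfab hfna n hn hineq
end
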